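/- arXiv:2208.04175 — 2 statements merged into one kernel-verified Lean document; each statement's English description precedes it below -/
import Mathlib

section
/- Let m ≥ n ≥ 0 and let λ be a partition contained in the m×n box, with associated word w(λ) and sequence b(λ) = (b_1,…,b_n). Then in the path algebra 𝒫 one has the factorization w(λ) = wt_{b_1}·wt_{b_2}·⋯·wt_{b_n}·𝗇^{m−n}. -/
noncomputable section

/-- The base field `F = ℂ(q)`. -/
abbrev F : Type := RatFunc ℂ

/-- The indeterminate `q`. -/
def qq : F := RatFunc.X

/-- The `q`-integer `[j]_q = 1 + q + ⋯ + q^(j-1)`. -/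
def qint (j : ℕ) : F := ∑ i ∈ Finset.range j, qq ^ i

/-- The `q`-factorial `[j]_q! = [1]_q ⋯ [j]_q`. -/
def qfact (j : ℕ) : F := ∏ i ∈ Finset.range j, qint (i + 1)

/-- Modular relations defining the path algebra `𝒫`; the letter `true` is `𝗇`,
the letter `false` is `𝖾`. -/
inductive PathRel : FreeAlgebra F Bool → FreeAlgebra F Bool → Prop where
  | mod1 : PathRel
      ((1 + qq) • (FreeAlgebra.ι F false * FreeAlgebra.ι F true * FreeAlgebra.ι F false))
      (qq • (FreeAlgebra.ι F false * FreeAlgebra.ι F false * FreeAlgebra.ι F true) +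
        FreeAlgebra.ι F true * FreeAlgebra.ι F false * FreeAlgebra.ι F false)
  | mod2 : PathRel
      ((1 + qq) • (FreeAlgebra.ι F true * FreeAlgebra.ι F false * FreeAlgebra.ι F true))
      (qq • (FreeAlgebra.ι F false * FreeAlgebra.ι F true * FreeAlgebra.ι F true) +
        FreeAlgebra.ι F true * FreeAlgebra.ι F true * FreeAlgebra.ι F false)

/-- The path algebra `𝒫`. -/
abbrev PathAlg : Type := RingQuot PathRel

/-- The generator `𝗇` of `𝒫`. -/
def Pn : PathAlg := RingQuot.mkAlgHom F PathRel (FreeAlgebra.ι F true)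

/-- The generator `𝖾` of `𝒫`. -/
def Pe : PathAlg := RingQuot.mkAlgHom F PathRel (FreeAlgebra.ι F false)

/-- The element of `𝒫` determined by a word in `𝗇` (`true`) and `𝖾` (`false`). -/
def wordElem (w : List Bool) : PathAlg := (w.map fun b => if b then Pn else Pe).prod

/-- `𝒫_{m,n}`: the span of words with `m` letters `𝗇` and `n` letters `𝖾`. -/
def Pmn (m n : ℕ) : Submodule F PathAlg :=
  Submodule.span F {x | ∃ w : List Bool, w.count true = m ∧ w.count false = n ∧ x = wordElem w}

/-- `lam` (0-indexed list of parts) is a partition contained in the `m × n` box. -/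
def IsPartitionIn (m n : ℕ) (lam : ℕ → ℕ) : Prop :=
  (∀ i j, i ≤ j → lam j ≤ lam i) ∧ (∀ i, lam i ≤ n) ∧ (∀ i, m ≤ i → lam i = 0)

/-- `eastBefore w r` = number of east steps (`false`) preceding the `(r+1)`-st
north step (`true`) of `w`. -/
def eastBefore : List Bool → ℕ → ℕ
  | [], _ => 0
  | true :: _, 0 => 0
  | true :: w, r + 1 => eastBefore w r
  | false :: w, r => eastBefore w r + 1

/-- `northBefore w r` = number of north steps (`true`) preceding the `(r+1)`-st
east step (`false`) of `w`. -/
def northBefore : List Bool → ℕ → ℕ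
  | [], _ => 0
  | false :: _, 0 => 0
  | false :: w, r + 1 => northBefore w r
  | true :: w, r => northBefore w r + 1

/-- The partition `λ(w)` of a word with `m` letters `𝗇`, as a 0-indexed function:
row `i` (from the top) of the partition has `eastBefore w (m-1-i)` cells. -/
def wordLam (m : ℕ) (w : List Bool) : ℕ → ℕ :=
  fun i => if i < m then eastBefore w (m - 1 - i) else 0

/-- The word `w(λ)` of a partition `λ ⊆ m × n` (given as 0-indexed `lam : ℕ → ℕ`). -/
def wordOf (m n : ℕ) (lam : ℕ → ℕ) : List Bool :=
  ((List.range m).flatMap fun k =>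
    List.replicate (lam (m - 1 - k) - lam (m - k)) false ++ [true]) ++
    List.replicate (n - lam 0) false

/-- The rook in column `j` of the placement `ρ` lies inside the Ferrers board of `lam`. -/
def rookInside (m n : ℕ) (lam : ℕ → ℕ) (ρ : Fin n ↪ Fin m) (j : Fin n) : Prop :=
  (j : ℕ) < lam (ρ j)

/-- The cell in row `i` (0-indexed from the top) and column `j` (0-indexed from the left)
is unattacked for the maximal non-attacking rook placement `ρ` (with the Ferrers board of
`lam` drawn in the top-left corner of the `m × n` board). -/
def Unattacked (m n : ℕ) (lam : ℕ → ℕ) (ρ : Fin n ↪ Fin m) (i : Fin m) (j : Fin n) : Prop :=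
  ρ j ≠ i ∧ ¬ ((ρ j : ℕ) < (i : ℕ)) ∧
    (if (j : ℕ) < lam i then
      (∀ j' : Fin n, ρ j' = i → ¬ (j' < j)) ∧
      (∀ j' : Fin n, ρ j' = i → j < j' → (j' : ℕ) < lam i)
    else
      ∀ j' : Fin n, ρ j' = i → j' < j → (j' : ℕ) < lam i)

/-- `stat ρ` = number of unattacked cells. -/
def statRook (m n : ℕ) (lam : ℕ → ℕ) (ρ : Fin n ↪ Fin m) : ℕ :=
  Set.ncard {p : Fin m × Fin n | Unattacked m n lam ρ p.1 p.2}

/-- The `q`-hit number `H_k^{m,n}(λ)`. -/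
def qHit (m n : ℕ) (lam : ℕ → ℕ) (k : ℕ) : F :=
  ∑ ρ : Fin n ↪ Fin m,
    if Set.ncard {j : Fin n | rookInside m n lam ρ j} = k then qq ^ statRook m n lam ρ else 0

/-- A Dyck word of size `N`. -/
def IsDyck (N : ℕ) (w : List Bool) : Prop :=
  w.count true = N ∧ w.count false = N ∧
    ∀ p : ℕ, (w.take p).count false ≤ (w.take p).count true

/-- Adjacency of the Dyck graph `G(D)` of a Dyck word of size `N` on vertices `Fin N`
(0-indexed: vertex `a` is the vertex `a+1` of `{1,…,N}`). -/
def dyckAdj (N : ℕ) (w : List Bool) (a b : Fin N) : Prop :=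
  ((a : ℕ) < b ∧ (b : ℕ) < northBefore w a) ∨ ((b : ℕ) < a ∧ (a : ℕ) < northBefore w b)

/-- Proper colorings of the Dyck graph `G(w)` with `ν` colors. -/
def properColorings (N ν : ℕ) (w : List Bool) : Set (Fin N → Fin ν) :=
  {κ | ∀ a b : Fin N, dyckAdj N w a b → κ a ≠ κ b}

/-- Number of ascents of a coloring. -/
def ascColor (N ν : ℕ) (w : List Bool) (κ : Fin N → Fin ν) : ℕ :=
  Set.ncard {p : Fin N × Fin N | (p.1 : ℕ) < p.2 ∧ dyckAdj N w p.1 p.2 ∧ κ p.1 < κ p.2}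

open scoped Classical in
/-- The chromatic quasisymmetric polynomial `X_{G(w)}(x_1,…,x_ν; q)`. -/
def chromX (N ν : ℕ) (w : List Bool) : MvPolynomial (Fin ν) F :=
  ∑ κ : Fin N → Fin ν,
    if κ ∈ properColorings N ν w then
      MvPolynomial.C (qq ^ ascColor N ν w κ) * ∏ a : Fin N, MvPolynomial.X (κ a)
    else 0

/-- The staircase word `δ_k = 𝖾^{n-k}(𝗇𝖾)^k𝗇^{m-k}`. -/
def deltaWord (m n k : ℕ) : List Bool :=
  List.replicate (n - k) false ++ (List.replicate k [true, false]).flatten ++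
    List.replicate (m - k) true

/-- `m_w`: the largest `k` with `λ(w) ⊆ λ(δ_k)`, i.e. such that the path of `δ_k`
lies weakly below the path of `w`. -/
def mw (m n : ℕ) (w : List Bool) : ℕ :=
  Finset.sup ((Finset.range (min m n + 1)).filter fun k =>
    ∀ i ∈ Finset.range m, wordLam m w i ≤ wordLam m (deltaWord m n k) i) id

/-- The lattice paths of `w` and `d` share the unit step of `w` corresponding to
the letter at (0-indexed) position `p` of `w`. -/
def StepShared (w d : List Bool) (p : ℕ) : Prop :=
  ∃ p' : ℕ, p' < d.length ∧ d[p']? = w[p]? ∧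
    (d.take p').count true = (w.take p).count true ∧
    (d.take p').count false = (w.take p).count false

/-- `w` possesses a critical factor: a factor `𝗇^i𝖾` or `𝗇𝖾^i` with `i ≥ 2`, whose run of
repeated letters is maximal within `w`, and whose letters contain a unit step shared by
the lattice paths of `w` and of `δ_{m_w}`. -/
def HasCriticalFactor (m n : ℕ) (w : List Bool) : Prop :=
  ∃ (x y : List Bool) (i : ℕ), 2 ≤ i ∧
    ((w = x ++ (List.replicate i true ++ [false]) ++ y ∧ x.getLast? ≠ some true ∧
        ∃ p, x.length ≤ p ∧ p < x.length + i + 1 ∧ StepShared w (deltaWord m n (mw m n w)) p) ∨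
      (w = x ++ ([true] ++ List.replicate i false) ++ y ∧ y.head? ≠ some false ∧
        ∃ p, x.length ≤ p ∧ p < x.length + i + 1 ∧ StepShared w (deltaWord m n (mw m n w)) p))

/-- Evaluation of a (commutative) polynomial in two variables at the commuting elements
`s`, `t` of `𝒫`. -/
def evalST (s t : PathAlg) (P : MvPolynomial (Fin 2) F) : PathAlg :=
  ∑ d ∈ P.support, P.coeff d • (s ^ (d 0) * t ^ (d 1))

/-- The conjugate partition: `conjP m lam i = λ'_i = #{rows r : λ_r ≥ i}` (here `i ≥ 1`,
rows 0-indexed, `lam` supported on `[0, m)`). -/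
def conjP (m : ℕ) (lam : ℕ → ℕ) (i : ℕ) : ℕ :=
  ((Finset.range m).filter fun r => i ≤ lam r).card

/-- The sequence `b(λ) = (b_1,…,b_n)` (1-indexed `i`) for `λ ⊆ m × n`, `m ≥ n`. -/
def bSeq (m : ℕ) (lam : ℕ → ℕ) (i : ℕ) : ℤ :=
  if lam (m - i) < i then (m : ℤ) + 1 - i - conjP m lam i else (i : ℤ) - lam (m - i)

/-- The element `wt_i ∈ 𝒫`. -/
def wt (i : ℤ) : PathAlg :=
  if 1 ≤ i then qint i.toNat • (Pn * Pe) - (qq * qint (i - 1).toNat) • (Pe * Pn)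
  else (qq ^ i) • (qint (1 - i).toNat • (Pe * Pn) - qint (-i).toNat • (Pn * Pe))

/-- The defining relations of the `q`-Klyachko algebra. -/
def klyRels : Set (MvPolynomial ℤ F) :=
  {x | ∃ i : ℤ, x = MvPolynomial.C (1 + qq) * (MvPolynomial.X i * MvPolynomial.X i) -
    (MvPolynomial.C qq * (MvPolynomial.X i * MvPolynomial.X (i - 1)) +
      MvPolynomial.X i * MvPolynomial.X (i + 1))}

/-- The `q`-Klyachko algebra `𝒦`. -/
abbrev Kly : Type := MvPolynomial ℤ F ⧸ Ideal.span klyRels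

/-- The generator `u_i` of `𝒦`. -/
def uK (i : ℤ) : Kly := Ideal.Quotient.mk (Ideal.span klyRels) (MvPolynomial.X i)

/-- The element `u(λ) = u_{a_1} ⋯ u_{a_m}` of `𝒦`, where `a(λ)` is the area sequence
of `λ ⊆ m × m` (here `a_{i+1} = (i+1) - λ_{m-i}` with `lam` 0-indexed). -/
def uLam (m : ℕ) (lam : ℕ → ℕ) : Kly :=
  ∏ i ∈ Finset.range m, uK ((i : ℤ) + 1 - lam (m - 1 - i))

/-- The partition `λ(G(D))` of a Dyck word of size `N`, 0-indexed:
`λ_{i+1} = N - h_{i+1}(D)`. -/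
def lamG (N : ℕ) (D : List Bool) : ℕ → ℕ :=
  fun i => if i < N then N - northBefore D i else 0

/-- The number of nonzero parts of `λ(G(D))`. -/
def ellG (N : ℕ) (D : List Bool) : ℕ :=
  ((Finset.range N).filter fun i => N - northBefore D i ≠ 0).card

/-- The Dyck graph `G(D)` is abelian. -/
def IsAbelian (N : ℕ) (D : List Bool) : Prop := lamG N D 0 + ellG N D ≤ N

/-- `r` is an acyclic orientation of the graph with adjacency `adj` on `Fin N`. -/
def IsAcyclicOrientation (N : ℕ) (adj : Fin N → Fin N → Prop)
    (r : Fin N → Fin N → Bool) : Prop :=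
  (∀ a b, r a b = true → adj a b) ∧
  (∀ a b, adj a b → (r a b = true ↔ ¬ r b a = true)) ∧
  (∀ a, ¬ Relation.TransGen (fun u v => r u v = true) a a)

/-- Number of ascents of an orientation. -/
def ascOrient (N : ℕ) (r : Fin N → Fin N → Bool) : ℕ :=
  Set.ncard {p : Fin N × Fin N | r p.1 p.2 = true ∧ (p.1 : ℕ) < p.2}

/-- Remove from `S` the sources of the orientation restricted to `S`. -/
def peel (N : ℕ) (r : Fin N → Fin N → Bool) (S : Set (Fin N)) : Set (Fin N) :=
  {v ∈ S | ∃ u ∈ S, r u v = true}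

/-- Number of sources of the orientation restricted to `S`. -/
def numSources (N : ℕ) (r : Fin N → Fin N → Bool) (S : Set (Fin N)) : ℕ :=
  Set.ncard {v ∈ S | ∀ u ∈ S, ¬ r u v = true}

open scoped Classical in
/-- `initial(A)`: the number of leading entries of the source sequence equal to `2`. -/
def initialA (N : ℕ) (r : Fin N → Fin N → Bool) : ℕ :=
  Finset.sup ((Finset.range (N + 1)).filter fun j =>
    ∀ k < j, numSources N r ((peel N r)^[k] Set.univ) = 2) id


end

noncomputable section Aux


lemma sm_neg (c : F) (x : PathAlg) : (-c) • x = -(c • x) := neg_smul c x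
lemma sm_smul (a b : F) (x : PathAlg) : a • b • x = (a * b) • x := smul_smul a b x
lemma sm_sub (a : F) (x y : PathAlg) : a • (x - y) = a • x - a • y := smul_sub a x y
lemma sm_add (a : F) (x y : PathAlg) : a • (x + y) = a • x + a • y := smul_add a x y
lemma sm_mul (a : F) (x y : PathAlg) : (a • x) * y = a • (x * y) := smul_mul_assoc a x y
lemma mul_sm (a : F) (x y : PathAlg) : x * (a • y) = a • (x * y) := mul_smul_comm a x y
lemma sm_one (x : PathAlg) : (1 : F) • x = x := one_smul F x
lemma sm_zero (x : PathAlg) : (0 : F) • x = 0 := zero_smul F x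
lemma add_sm (a b : F) (x : PathAlg) : (a + b) • x = a • x + b • x := add_smul a b x


lemma qq_ne_zero : qq ≠ 0 := RatFunc.X_ne_zero

lemma qq_ne_one : qq ≠ 1 := by
  intro h
  have h2 : algebraMap (Polynomial ℂ) (RatFunc ℂ) Polynomial.X
      = algebraMap (Polynomial ℂ) (RatFunc ℂ) 1 := by
    rw [RatFunc.algebraMap_X, map_one]; exact h
  have h3 : (Polynomial.X : Polynomial ℂ) = 1 := RatFunc.algebraMap_injective ℂ h2
  simpa using congrArg Polynomial.natDegree h3

lemma qq_sub_one_ne_zero : qq - 1 ≠ 0 := sub_ne_zero.mpr qq_ne_one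

def PX : PathAlg := Pn * Pe
def PY : PathAlg := Pe * Pn

def al (i : ℤ) : F := (qq ^ i - 1) / (qq - 1)
def be (i : ℤ) : F := (qq - qq ^ i) / (qq - 1)

lemma qint_eq (k : ℕ) : qint k = (qq ^ k - 1) / (qq - 1) := by
  rw [eq_div_iff qq_sub_one_ne_zero]
  exact geom_sum_mul qq k

lemma al_rec (i : ℤ) : al (i + 1) = (1 + qq) * al i + be i := by
  unfold al be
  rw [zpow_add_one₀ qq_ne_zero]
  field_simp
  ring

lemma be_rec (i : ℤ) : be (i + 1) = -(qq * al i) := by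
  unfold al be
  rw [zpow_add_one₀ qq_ne_zero]
  field_simp
  ring

lemma wt_eq (i : ℤ) : wt i = al i • PX + be i • PY := by
  unfold wt PX PY al be
  split_ifs with h
  · have h1 : qq ^ (i.toNat) = qq ^ i := by
      rw [← zpow_natCast, Int.toNat_of_nonneg (by omega)]
    have h2 : qq ^ ((i-1).toNat) = qq ^ (i-1) := by
      rw [← zpow_natCast, Int.toNat_of_nonneg (by omega)]
    rw [qint_eq, qint_eq, h1, h2]
    have e1 : qq * ((qq ^ (i-1) - 1) / (qq - 1)) = -((qq - qq ^ i) / (qq - 1)) := by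
      have h3 : qq * qq ^ (i - 1) = qq ^ i := by
        rw [mul_comm, ← zpow_add_one₀ qq_ne_zero, sub_add_cancel]
      rw [← mul_div_assoc, mul_sub, h3]
      ring
    rw [e1, sm_neg, sub_neg_eq_add]
  · have h1 : qq ^ ((1 - i).toNat) = qq ^ (1 - i) := by
      rw [← zpow_natCast, Int.toNat_of_nonneg (by omega)]
    have h2 : qq ^ ((-i).toNat) = qq ^ (-i) := by
      rw [← zpow_natCast, Int.toNat_of_nonneg (by omega)]
    rw [qint_eq, qint_eq, h1, h2]
    have e1 : qq ^ i * ((qq ^ (1 - i) - 1) / (qq - 1)) = (qq - qq ^ i) / (qq - 1) := by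
      have hz : qq ^ i * qq ^ (1 - i) = qq := by
        rw [← zpow_add₀ qq_ne_zero]
        have : i + (1 - i) = 1 := by ring
        rw [this, zpow_one]
      rw [← mul_div_assoc, mul_sub, hz]
      ring
    have e2 : qq ^ i * ((qq ^ (-i) - 1) / (qq - 1)) = -((qq ^ i - 1) / (qq - 1)) := by
      have hz : qq ^ i * qq ^ (-i) = 1 := by
        rw [← zpow_add₀ qq_ne_zero]
        have : i + -i = 0 := by ring
        rw [this, zpow_zero]
      rw [← mul_div_assoc, mul_sub, hz]
      ring
    rw [sm_sub, sm_smul, sm_smul, e1, e2, sm_neg, sub_neg_eq_add, add_comm]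


lemma R1 : (1 + qq) • (Pe * Pn * Pe) = qq • (Pe * Pe * Pn) + Pn * Pe * Pe := by
  have h := RingQuot.mkAlgHom_rel F PathRel.mod1
  simpa only [map_smul, map_add, map_mul, Pn, Pe] using h

lemma R2 : (1 + qq) • (Pn * Pe * Pn) = qq • (Pe * Pn * Pn) + Pn * Pn * Pe := by
  have h := RingQuot.mkAlgHom_rel F PathRel.mod2
  simpa only [map_smul, map_add, map_mul, Pn, Pe] using h

lemma XY_comm : PX * PY = PY * PX := by
  have h1 := congrArg (· * Pn) R1
  have h2 := congrArg (Pe * ·) R2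
  simp only [sm_mul, mul_sm, add_mul, mul_add, mul_assoc] at h1 h2
  have h4 := add_left_cancel (h1.symm.trans h2)
  show Pn * Pe * (Pe * Pn) = Pe * Pn * (Pn * Pe)
  simp only [mul_assoc]
  exact h4

lemma hnne : Pn * (Pn * Pe) = (1 + qq) • (Pn * (Pe * Pn)) - qq • (Pe * (Pn * Pn)) := by
  have h := R2
  simp only [mul_assoc] at h
  rw [eq_sub_iff_add_eq, add_comm]
  exact h.symm

lemma hnee : Pn * (Pe * Pe) = (1 + qq) • (Pe * (Pn * Pe)) - qq • (Pe * (Pe * Pn)) := by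
  have h := R1
  simp only [mul_assoc] at h
  rw [eq_sub_iff_add_eq, add_comm]
  exact h.symm

lemma L1 (i : ℤ) : Pn * wt i = wt (i + 1) * Pn := by
  rw [wt_eq, wt_eq, al_rec, be_rec]
  unfold PX PY
  rw [mul_add, add_mul, mul_sm, mul_sm, sm_mul, sm_mul]
  rw [hnne, mul_assoc Pn Pe Pn, mul_assoc Pe Pn Pn]
  rw [sm_sub, sm_smul, sm_smul, add_sm, sm_neg]
  rw [mul_comm (al i) (1 + qq), mul_comm (al i) qq]
  abel

lemma L2 (i : ℤ) : wt i * Pe = Pe * wt (i + 1) := by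
  rw [wt_eq, wt_eq, al_rec, be_rec]
  unfold PX PY
  rw [add_mul, mul_add, sm_mul, sm_mul, mul_sm, mul_sm]
  rw [show Pn * Pe * Pe = Pn * (Pe * Pe) from mul_assoc Pn Pe Pe] 
  rw [hnee, mul_assoc Pe Pn Pe]
  rw [sm_sub, sm_smul, sm_smul, add_sm, sm_neg]
  rw [mul_comm (al i) (1 + qq), mul_comm (al i) qq]
  abel

lemma L3 (i j : ℤ) : Commute (wt i) (wt j) := by
  show wt i * wt j = wt j * wt i
  rw [wt_eq i, wt_eq j]
  simp only [add_mul, mul_add, sm_mul, mul_sm, sm_smul]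
  rw [XY_comm]
  simp only [mul_comm]
  abel

lemma wt_one : wt 1 = Pn * Pe := by
  rw [wt_eq]
  unfold al be PX PY
  rw [zpow_one, sub_self, zero_div, sm_zero, add_zero, div_self qq_sub_one_ne_zero, sm_one]

lemma wt_zero : wt 0 = Pe * Pn := by
  rw [wt_eq]
  unfold al be PX PY
  rw [zpow_zero, sub_self, zero_div, sm_zero, zero_add, div_self qq_sub_one_ne_zero, sm_one]


def wtProd (L : List ℤ) : PathAlg := (L.map wt).prod

lemma wtProd_nil : wtProd [] = 1 := rfl

lemma wtProd_cons (a : ℤ) (t : List ℤ) : wtProd (a :: t) = wt a * wtProd t := by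
  simp [wtProd]

lemma wtProd_append (t u : List ℤ) : wtProd (t ++ u) = wtProd t * wtProd u := by
  simp [wtProd]

lemma wtProd_singleton (a : ℤ) : wtProd [a] = wt a := by simp [wtProd]

lemma Pn_wtProd (L : List ℤ) : Pn * wtProd L = wtProd (L.map (· + 1)) * Pn := by
  induction L with
  | nil => simp [wtProd]
  | cons a t ih =>
    rw [List.map_cons, wtProd_cons, wtProd_cons, ← mul_assoc, L1, mul_assoc, ih, ← mul_assoc]

lemma wtProd_Pe (L : List ℤ) : wtProd L * Pe = Pe * wtProd (L.map (· + 1)) := by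
  induction L using List.reverseRecOn with
  | nil => simp [wtProd]
  | append_singleton t a ih =>
    rw [List.map_append, wtProd_append, wtProd_append, List.map_singleton,
      wtProd_singleton, wtProd_singleton, mul_assoc, L2, ← mul_assoc, ih, mul_assoc]

lemma map_add_sub_id (L : List ℤ) : (L.map (· - 1)).map (· + 1) = L := by
  rw [List.map_map]
  have : ((· + 1) ∘ (· - 1) : ℤ → ℤ) = id := by funext x; simp
  rw [this, List.map_id]

lemma wtProd_Pn' (L : List ℤ) : wtProd L * Pn = Pn * wtProd (L.map (· - 1)) := by
  have h := Pn_wtProd (L.map (· - 1))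
  rw [map_add_sub_id] at h
  rw [h]

lemma Pe_wtProd' (L : List ℤ) : Pe * wtProd L = wtProd (L.map (· - 1)) * Pe := by
  have h := wtProd_Pe (L.map (· - 1))
  rw [map_add_sub_id] at h
  rw [h]

lemma Pn_pow_wt (k : ℕ) (i : ℤ) : Pn ^ k * wt i = wt (i + k) * Pn ^ k := by
  induction k generalizing i with
  | zero => simp
  | succ k ih =>
    rw [pow_succ, mul_assoc, L1, ← mul_assoc, ih (i + 1), mul_assoc, ← pow_succ]
    congr 1
    push_cast
    ring

lemma wtProd_pairwise (M : List ℤ) : (M.map wt).Pairwise Commute := by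
  induction M with
  | nil => simp
  | cons b t ih =>
    rw [List.map_cons, List.pairwise_cons]
    refine ⟨fun x hx => ?_, ih⟩
    obtain ⟨c, _, rfl⟩ := List.mem_map.mp hx
    exact L3 b c

lemma wtProd_perm {L L' : List ℤ} (h : L.Perm L') : wtProd L = wtProd L' :=
  List.Perm.prod_eq' (h.map wt) (wtProd_pairwise L)

lemma wordElem_append (u v : List Bool) : wordElem (u ++ v) = wordElem u * wordElem v := by
  simp [wordElem]

lemma wordElem_cons (b : Bool) (w : List Bool) :
    wordElem (b :: w) = (if b then Pn else Pe) * wordElem w := by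
  simp [wordElem]

lemma wordElem_true : wordElem [true] = Pn := by simp [wordElem]

lemma wordElem_false : wordElem [false] = Pe := by simp [wordElem]

lemma wordElem_replicate_true (k : ℕ) : wordElem (List.replicate k true) = Pn ^ k := by
  induction k with
  | zero => simp [wordElem]
  | succ k ih =>
    rw [List.replicate_succ, wordElem_cons, ih]
    simp [← pow_succ']

lemma wordElem_replicate_false (k : ℕ) : wordElem (List.replicate k false) = Pe ^ k := by
  induction k with
  | zero => simp [wordElem]
  | succ k ih =>
    rw [List.replicate_succ, wordElem_cons, ih]
    simp [← pow_succ']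


lemma conjP_le (m : ℕ) (lam : ℕ → ℕ) (c : ℕ) : conjP m lam c ≤ m := by
  unfold conjP
  exact le_trans (Finset.card_filter_le _ _) (by simp)

lemma conjP_lt_iff (m : ℕ) (lam : ℕ → ℕ) (hmono : ∀ i j, i ≤ j → lam j ≤ lam i)
    (c r : ℕ) : r < conjP m lam c ↔ r < m ∧ c ≤ lam r := by
  constructor
  · intro h
    have hrm : r < m := lt_of_lt_of_le h (conjP_le m lam c)
    refine ⟨hrm, ?_⟩
    by_contra hlt
    push_neg at hlt
    have hsub : (Finset.range m).filter (fun x => c ≤ lam x) ⊆ Finset.range r := by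
      intro x hx
      simp only [Finset.mem_filter, Finset.mem_range] at hx ⊢
      by_contra hxr
      push_neg at hxr
      exact absurd (le_trans hx.2 (hmono r x hxr)) (by omega)
    have h2 := Finset.card_le_card hsub
    rw [Finset.card_range] at h2
    unfold conjP at h
    omega
  · rintro ⟨hrm, hcl⟩
    have hsub : Finset.range (r+1) ⊆ (Finset.range m).filter (fun x => c ≤ lam x) := by
      intro x hx
      simp only [Finset.mem_range] at hx
      simp only [Finset.mem_filter, Finset.mem_range]
      exact ⟨by omega, le_trans hcl (hmono x r (by omega))⟩
    have h2 := Finset.card_le_card hsub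
    rw [Finset.card_range] at h2
    unfold conjP
    omega

lemma conjP_eq_zero (m : ℕ) (lam : ℕ → ℕ) (hmono : ∀ i j, i ≤ j → lam j ≤ lam i)
    (c : ℕ) (h : lam 0 < c) : conjP m lam c = 0 := by
  unfold conjP
  rw [Finset.card_eq_zero, Finset.filter_eq_empty_iff]
  intro x _
  exact not_le.mpr (lt_of_le_of_lt (hmono 0 x (Nat.zero_le x)) h)

lemma conjP_shift (m : ℕ) (lam : ℕ → ℕ) (c : ℕ) (hm : 1 ≤ m) (h0 : c ≤ lam 0) :
    conjP m lam c = conjP (m-1) (fun j => lam (j+1)) c + 1 := by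
  unfold conjP
  have hset : (Finset.range m).filter (fun r => c ≤ lam r)
      = insert 0 (((Finset.range (m-1)).filter (fun r => c ≤ lam (r+1))).image (· + 1)) := by
    ext x
    simp only [Finset.mem_filter, Finset.mem_range, Finset.mem_insert, Finset.mem_image]
    constructor
    · rintro ⟨hx, hcx⟩
      rcases Nat.eq_zero_or_pos x with h | h
      · exact Or.inl h
      · refine Or.inr ⟨x - 1, ⟨⟨by omega, ?_⟩, by omega⟩⟩
        have hx1 : x - 1 + 1 = x := by omega
        rw [hx1]
        exact hcx
    · rintro (rfl | ⟨y, ⟨⟨hy, hcy⟩, rfl⟩⟩)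
      · exact ⟨by omega, h0⟩
      · exact ⟨by omega, hcy⟩
  rw [hset, Finset.card_insert_of_notMem (by simp),
    Finset.card_image_of_injective _ (add_left_injective 1)]

lemma wordOf_last_e (m n : ℕ) (lam : ℕ → ℕ) (h : lam 0 < n) :
    wordOf m n lam = wordOf m (n-1) lam ++ [false] := by
  unfold wordOf
  rw [List.append_assoc]
  congr 1
  have h1 : n - lam 0 = (n - 1 - lam 0) + 1 := by omega
  rw [h1, List.replicate_succ']

lemma wordOf_last_n (m n : ℕ) (lam : ℕ → ℕ) (hm : 1 ≤ m) (h : lam 0 = n) :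
    wordOf m n lam = wordOf (m-1) n (fun j => lam (j+1)) ++ [true] := by
  unfold wordOf
  obtain ⟨m', rfl⟩ : ∃ m', m = m' + 1 := ⟨m - 1, by omega⟩
  simp only [Nat.add_sub_cancel]
  rw [List.range_succ, List.flatMap_append, List.flatMap_singleton]
  have h2 : List.replicate (lam (m' - m') - lam (m' + 1 - m')) false
      = List.replicate (n - lam (0 + 1)) false := by
    have e1 : m' - m' = 0 := by omega
    have e2 : m' + 1 - m' = 1 := by omega
    rw [e1, e2, h]
  have h3 : (List.range m').flatMap (fun k =>
      List.replicate (lam (m' - k) - lam (m' + 1 - k)) false ++ [true])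
      = (List.range m').flatMap (fun k =>
        List.replicate (lam (m' - 1 - k + 1) - lam (m' - k + 1)) false ++ [true]) := by
    apply List.flatMap_congr
    intro x hx
    rw [List.mem_range] at hx
    have e1 : m' - 1 - x + 1 = m' - x := by omega
    have e2 : m' - x + 1 = m' + 1 - x := by omega
    rw [e1, e2]
  rw [h2, h3, show n - lam 0 = 0 from by omega, List.replicate_zero, List.append_nil,
    List.append_assoc]

lemma flatMap_const_true : ∀ (M : ℕ),
    (List.range M).flatMap (fun _ => [true]) = List.replicate M true := by
  intro M
  induction M with
  | zero => simp
  | succ k ih =>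
    rw [List.range_succ, List.flatMap_append, ih, List.flatMap_singleton,
      ← List.replicate_succ']

lemma wordOf_allzero (m n : ℕ) (lam : ℕ → ℕ) (h : ∀ i, lam i = 0) :
    wordOf m n lam = List.replicate m true ++ List.replicate n false := by
  unfold wordOf
  rw [h 0, Nat.sub_zero]
  congr 1
  rw [← flatMap_const_true m]
  apply List.flatMap_congr
  intro x _
  simp [h]


def vS (m : ℕ) (lam : ℕ → ℕ) (j : ℕ) : ℤ := (m:ℤ) + 1 - j - conjP m lam j
def uS (n : ℕ) (lam : ℕ → ℕ) (i : ℕ) : ℤ := (n:ℤ) + 1 - i - lam (i-1)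

lemma count_list_map (f : ℕ → ℤ) (N : ℕ) (a : ℤ) :
    Multiset.count a ((List.range N).map f : Multiset ℤ)
      = ((Finset.range N).filter fun j => a = f j).card := by
  rw [show ((List.range N).map f : Multiset ℤ) = Multiset.map f ((Finset.range N).val) from rfl,
    Multiset.count_map]
  rfl

lemma perm_of_count (f g : ℕ → ℤ) (N M : ℕ)
    (h : ∀ a : ℤ, ((Finset.range N).filter fun j => a = f j).card
      = ((Finset.range M).filter fun j => a = g j).card) :
    ((List.range N).map f).Perm ((List.range M).map g) := by
  rw [← Multiset.coe_eq_coe]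
  apply Multiset.ext.mpr
  intro a
  rw [show (↑((List.range N).map f) : Multiset ℤ) = ((List.range N).map f : Multiset ℤ) from rfl]
  rw [count_list_map, count_list_map]
  exact h a

lemma core_ge (m n : ℕ) (lam : ℕ → ℕ) (hmn : n ≤ m)
    (hmono : ∀ i j, i ≤ j → lam j ≤ lam i) (hle : ∀ i, lam i ≤ n)
    (s : ℕ) (hs : m ≤ s ∨ m = n) :
    ((Finset.range m).filter fun i => s ≤ lam i + i).card
      = ((Finset.range n).filter fun j => s ≤ conjP m lam (j+1) + j).card := by
  have hA := Finset.card_filter_add_card_filter_not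
    (s := (Finset.range m).filter fun i => s ≤ lam i + i) (p := fun i => s ≤ i)
  have hB := Finset.card_filter_add_card_filter_not
    (s := (Finset.range n).filter fun j => s ≤ conjP m lam (j+1) + j) (p := fun j => s ≤ j)
  have hA1 : (((Finset.range m).filter fun i => s ≤ lam i + i).filter fun i => s ≤ i)
      = Finset.Ico s m := by
    ext x
    simp only [Finset.mem_filter, Finset.mem_range, Finset.mem_Ico]
    omega
  have hB1 : (((Finset.range n).filter fun j => s ≤ conjP m lam (j+1) + j).filter fun j => s ≤ j)
      = Finset.Ico s n := by
    ext x
    simp only [Finset.mem_filter, Finset.mem_range, Finset.mem_Ico]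
    omega
  have hA2 : (((Finset.range m).filter fun i => s ≤ lam i + i).filter fun i => ¬ (s ≤ i))
      = ((Finset.range m).filter fun i => (s ≤ lam i + i ∧ i < s)) := by
    ext x
    simp only [Finset.mem_filter, Finset.mem_range]
    omega
  have hB2 : (((Finset.range n).filter fun j => s ≤ conjP m lam (j+1) + j).filter fun j => ¬ (s ≤ j))
      = ((Finset.range n).filter fun j => (s ≤ conjP m lam (j+1) + j ∧ j < s)) := by
    ext x
    simp only [Finset.mem_filter, Finset.mem_range]
    omega
  have hbij : ((Finset.range m).filter fun i => (s ≤ lam i + i ∧ i < s)).card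
      = ((Finset.range n).filter fun j => (s ≤ conjP m lam (j+1) + j ∧ j < s)).card := by
    apply Finset.card_nbij' (i := fun i => s - 1 - i) (j := fun j => s - 1 - j)
    · intro a ha
      simp only [Finset.mem_coe, Finset.mem_filter, Finset.mem_range] at ha ⊢
      obtain ⟨ham, ha1, ha2⟩ := ha
      have hlea := hle a
      have hcp : a < conjP m lam (s - 1 - a + 1) := by
        rw [conjP_lt_iff m lam hmono]
        refine ⟨ham, ?_⟩
        have e : s - 1 - a + 1 = s - a := by omega
        rw [e]
        omega
      refine ⟨by omega, by omega, by omega⟩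
    · intro b hb
      simp only [Finset.mem_coe, Finset.mem_filter, Finset.mem_range] at hb ⊢
      obtain ⟨hbn, hb1, hb2⟩ := hb
      have h3 : s - 1 - b < conjP m lam (b+1) := by omega
      rw [conjP_lt_iff m lam hmono] at h3
      refine ⟨h3.1, by omega, by omega⟩
    · intro a ha
      simp only [Finset.mem_coe, Finset.mem_filter, Finset.mem_range] at ha ⊢
      omega
    · intro b hb
      simp only [Finset.mem_coe, Finset.mem_filter, Finset.mem_range] at hb ⊢
      omega
  rw [hA1, hA2] at hA
  rw [hB1, hB2] at hB
  rw [Nat.card_Ico] at hA hB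
  have hms : m - s = n - s := by omega
  omega

lemma core_eq (m n : ℕ) (lam : ℕ → ℕ) (hmn : n ≤ m)
    (hmono : ∀ i j, i ≤ j → lam j ≤ lam i) (hle : ∀ i, lam i ≤ n)
    (s : ℕ) (hs : m ≤ s ∨ m = n) :
    ((Finset.range m).filter fun i => lam i + i = s).card
      = ((Finset.range n).filter fun j => conjP m lam (j+1) + j = s).card := by
  have h1 := core_ge m n lam hmn hmono hle s hs
  have h2 := core_ge m n lam hmn hmono hle (s+1) (by omega)
  have hA := Finset.card_filter_add_card_filter_not
    (s := (Finset.range m).filter fun i => s ≤ lam i + i) (p := fun i => lam i + i = s)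
  have hB := Finset.card_filter_add_card_filter_not
    (s := (Finset.range n).filter fun j => s ≤ conjP m lam (j+1) + j)
    (p := fun j => conjP m lam (j+1) + j = s)
  have eA1 : (((Finset.range m).filter fun i => s ≤ lam i + i).filter fun i => lam i + i = s)
      = (Finset.range m).filter fun i => lam i + i = s := by
    ext x; simp only [Finset.mem_filter, Finset.mem_range]; omega
  have eA2 : (((Finset.range m).filter fun i => s ≤ lam i + i).filter fun i => ¬ lam i + i = s)
      = (Finset.range m).filter fun i => s + 1 ≤ lam i + i := by
    ext x; simp only [Finset.mem_filter, Finset.mem_range]; omega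
  have eB1 : (((Finset.range n).filter fun j => s ≤ conjP m lam (j+1) + j).filter
        fun j => conjP m lam (j+1) + j = s)
      = (Finset.range n).filter fun j => conjP m lam (j+1) + j = s := by
    ext x; simp only [Finset.mem_filter, Finset.mem_range]; omega
  have eB2 : (((Finset.range n).filter fun j => s ≤ conjP m lam (j+1) + j).filter
        fun j => ¬ conjP m lam (j+1) + j = s)
      = (Finset.range n).filter fun j => s + 1 ≤ conjP m lam (j+1) + j := by
    ext x; simp only [Finset.mem_filter, Finset.mem_range]; omega
  rw [eA1, eA2] at hA
  rw [eB1, eB2] at hB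
  omega


lemma perm_bv (m n : ℕ) (lam : ℕ → ℕ) (hmn : n ≤ m)
    (hmono : ∀ i j, i ≤ j → lam j ≤ lam i) (hle : ∀ i, lam i ≤ n) :
    ((List.range n).map fun j => bSeq m lam (j+1)).Perm
      ((List.range n).map fun j => vS m lam (j+1)) := by
  apply perm_of_count
  intro a
  rcases lt_or_ge 0 a with ha | ha
  · apply congrArg Finset.card
    apply Finset.filter_congr
    intro j hj
    rw [Finset.mem_range] at hj
    simp only [bSeq, vS]
    by_cases hc : lam (m - (j+1)) < j+1
    · rw [if_pos hc]
    · rw [if_neg hc]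
      push_neg at hc
      constructor
      · intro h
        exfalso
        omega
      · intro h
        exfalso
        have h4 : m - 1 - j < conjP m lam (j+1) := by
          rw [conjP_lt_iff m lam hmono]
          refine ⟨by omega, ?_⟩
          have e : m - (j+1) = m - 1 - j := by omega
          rw [e] at hc
          exact hc
        omega
  · set t := (-a).toNat with htdef
    have hts : (t : ℤ) = -a := Int.toNat_of_nonneg (by omega)
    have hb : (Finset.range n).filter (fun j => a = bSeq m lam (j+1))
        = (Finset.range n).filter (fun j => lam (m-1-j) + (m-1-j) = m + t) := by
      apply Finset.filter_congr
      intro j hj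
      rw [Finset.mem_range] at hj
      simp only [bSeq]
      have e : m - (j+1) = m - 1 - j := by omega
      rw [e]
      by_cases hc : lam (m - 1 - j) < j + 1
      · rw [if_pos hc]
        constructor
        · intro h
          exfalso
          have h4 : conjP m lam (j+1) ≤ m - 1 - j := by
            by_contra hcon
            push_neg at hcon
            have h5 : m - 1 - j < conjP m lam (j+1) := hcon
            rw [conjP_lt_iff m lam hmono] at h5
            omega
          omega
        · intro h
          exfalso
          omega
      · rw [if_neg hc]
        push_neg at hc
        omega
    have hv : (Finset.range n).filter (fun j => a = vS m lam (j+1))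
        = (Finset.range n).filter (fun j => conjP m lam (j+1) + j = m + t) := by
      apply Finset.filter_congr
      intro j hj
      rw [Finset.mem_range] at hj
      simp only [vS]
      omega
    have hrow : ((Finset.range n).filter (fun j => lam (m-1-j) + (m-1-j) = m + t)).card
        = ((Finset.range m).filter (fun i => lam i + i = m + t)).card := by
      apply Finset.card_nbij' (i := fun j => m - 1 - j) (j := fun i => m - 1 - i)
      · intro x hx
        simp only [Finset.mem_coe, Finset.mem_filter, Finset.mem_range] at hx ⊢
        exact ⟨by omega, hx.2⟩
      · intro y hy
        simp only [Finset.mem_coe, Finset.mem_filter, Finset.mem_range] at hy ⊢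
        have hley := hle y
        refine ⟨by omega, ?_⟩
        have e : m - 1 - (m - 1 - y) = y := by omega
        rw [e]
        exact hy.2
      · intro x hx
        simp only [Finset.mem_coe, Finset.mem_filter, Finset.mem_range] at hx ⊢
        omega
      · intro y hy
        simp only [Finset.mem_coe, Finset.mem_filter, Finset.mem_range] at hy ⊢
        have := hle y
        omega
    rw [hb, hv, hrow, core_eq m n lam hmn hmono hle (m + t) (Or.inl (by omega))]

lemma perm_vu (n : ℕ) (lam : ℕ → ℕ)
    (hmono : ∀ i j, i ≤ j → lam j ≤ lam i) (hle : ∀ i, lam i ≤ n) :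
    ((List.range n).map fun j => vS n lam (j+1)).Perm
      ((List.range n).map fun i => uS n lam (i+1)) := by
  apply perm_of_count
  intro a
  rcases le_or_gt a n with ha | ha
  · set s := ((n:ℤ) - a).toNat with hsdef
    have hts : (s : ℤ) = (n:ℤ) - a := Int.toNat_of_nonneg (by omega)
    have hv : (Finset.range n).filter (fun j => a = vS n lam (j+1))
        = (Finset.range n).filter (fun j => conjP n lam (j+1) + j = s) := by
      apply Finset.filter_congr
      intro j hj
      rw [Finset.mem_range] at hj
      simp only [vS]
      omega
    have hu : (Finset.range n).filter (fun i => a = uS n lam (i+1))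
        = (Finset.range n).filter (fun i => lam i + i = s) := by
      apply Finset.filter_congr
      intro i hi
      rw [Finset.mem_range] at hi
      simp only [uS, Nat.add_sub_cancel]
      omega
    rw [hv, hu, ← core_eq n n lam le_rfl hmono hle s (Or.inr rfl)]
  · have hv : (Finset.range n).filter (fun j => a = vS n lam (j+1)) = ∅ := by
      rw [Finset.filter_eq_empty_iff]
      intro j hj
      rw [Finset.mem_range] at hj
      simp only [vS]
      omega
    have hu : (Finset.range n).filter (fun i => a = uS n lam (i+1)) = ∅ := by
      rw [Finset.filter_eq_empty_iff]
      intro i hi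
      rw [Finset.mem_range] at hi
      simp only [uS, Nat.add_sub_cancel]
      have := hle i
      omega
    rw [hv, hu]


lemma uS_head (n : ℕ) (lam : ℕ → ℕ) (hl0 : lam 0 = n) : uS n lam (0 + 1) = 0 := by
  simp only [uS, Nat.add_sub_cancel]
  omega

lemma uList_cons (m n : ℕ) (lam : ℕ → ℕ) (hm : 1 ≤ m) (hl0 : lam 0 = n) :
    (0 : ℤ) :: (((List.range (m-1)).map fun i => uS n (fun j => lam (j+1)) (i+1)).map (· - 1))
      = (List.range m).map fun i => uS n lam (i+1) := by
  rw [List.map_map]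
  conv_rhs => rw [show m = (m-1)+1 from by omega, List.range_succ_eq_map]
  rw [List.map_cons]
  congr 1
  · rw [uS_head n lam hl0]
  · rw [List.map_map]
    apply List.map_congr_left
    intro x hx
    simp only [Function.comp, uS, Nat.succ_eq_add_one, Nat.add_sub_cancel]
    omega

lemma vList_snoc (m n : ℕ) (lam : ℕ → ℕ) (hn : 1 ≤ n) :
    (List.range n).map (fun j => vS m lam (j+1))
      = ((List.range (n-1)).map fun j => vS m lam (j+1)) ++ [vS m lam n] := by
  conv_lhs => rw [show n = (n-1)+1 from by omega, List.range_succ]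
  rw [List.map_append, List.map_singleton, show n-1+1 = n from by omega]

lemma vS_top (m n : ℕ) (lam : ℕ → ℕ) (hmono : ∀ i j, i ≤ j → lam j ≤ lam i)
    (hl0 : lam 0 < n) (hnm : n ≤ m) : vS m lam n = 1 + ((m - n : ℕ) : ℤ) := by
  unfold vS
  rw [conjP_eq_zero m lam hmono n hl0]
  omega

lemma VLR : ∀ (K m n : ℕ) (lam : ℕ → ℕ), m + n ≤ K → IsPartitionIn m n lam →
    (n ≤ m → wordElem (wordOf m n lam)
      = wtProd ((List.range n).map fun j => vS m lam (j+1)) * Pn ^ (m - n)) ∧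
    (m ≤ n → wordElem (wordOf m n lam)
      = Pe ^ (n - m) * wtProd ((List.range m).map fun i => uS n lam (i+1))) := by
  intro K
  induction K with
  | zero =>
    intro m n lam hK hlam
    have hm : m = 0 := by omega
    have hn : n = 0 := by omega
    subst hm hn
    have hz : ∀ i, lam i = 0 := fun i => Nat.le_zero.mp (hlam.2.1 i)
    rw [wordOf_allzero 0 0 lam hz]
    constructor <;> intro _ <;> simp [wordElem, wtProd]
  | succ K ih =>
    intro m n lam hK hlam
    obtain ⟨hmono, hle, hzero⟩ := hlam
    have hle' : 1 ≤ n → lam 0 < n → ∀ i, lam i ≤ n - 1 :=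
      fun _ h2 i => le_trans (hmono 0 i (Nat.zero_le i)) (by omega)
    constructor
    · -- VL : n ≤ m
      intro hnm
      rcases Nat.eq_zero_or_pos n with hn0 | hn1
      · subst hn0
        have hz : ∀ i, lam i = 0 := fun i => Nat.le_zero.mp (hle i)
        rw [wordOf_allzero m 0 lam hz]
        simp [wordElem_append, wordElem_replicate_true, wtProd, wordElem]
      · rcases Nat.lt_or_ge (lam 0) n with hl0 | hl0x
        · -- case lam 0 < n : peel last east step
          have hIH := (ih m (n-1) lam (by omega)
            ⟨hmono, hle' hn1 hl0, hzero⟩).1 (by omega)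
          rw [wordOf_last_e m n lam hl0, wordElem_append, hIH, wordElem_false]
          rw [show m - (n-1) = (m - n) + 1 from by omega, pow_succ]
          rw [mul_assoc, mul_assoc, ← wt_one, Pn_pow_wt]
          rw [← mul_assoc, ← wtProd_singleton, ← wtProd_append]
          rw [vList_snoc m n lam hn1, vS_top m n lam hmono hl0 hnm]
        · -- case lam 0 = n
          have hl0 : lam 0 = n := le_antisymm (hle 0) hl0x
          have hlam' : IsPartitionIn (m-1) n (fun j => lam (j+1)) :=
            ⟨fun i j hij => hmono (i+1) (j+1) (by omega),
             fun i => hle (i+1), fun i hi => hzero (i+1) (by omega)⟩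
          rcases Nat.lt_or_ge n m with hlt | hge
          · -- n < m : peel last north step, stay VL
            have hIH := (ih (m-1) n (fun j => lam (j+1)) (by omega) hlam').1 (by omega)
            rw [wordOf_last_n m n lam (by omega) hl0, wordElem_append, hIH, wordElem_true]
            rw [mul_assoc, ← pow_succ, show (m-1-n)+1 = m-n from by omega]
            congr 2
            apply List.map_congr_left
            intro j hj
            rw [List.mem_range] at hj
            unfold vS
            rw [conjP_shift m lam (j+1) (by omega) (by omega)]
            omega
          · -- n = m : peel last north step, use VR(m-1,n)
            obtain rfl : m = n := by omega
            have hIH := (ih (m-1) m (fun j => lam (j+1)) (by omega) hlam').2 (by omega)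
            rw [wordOf_last_n m m lam (by omega) hl0, wordElem_append, hIH, wordElem_true]
            rw [show m - (m-1) = 1 from by omega, pow_one, mul_assoc, wtProd_Pn']
            rw [← mul_assoc, ← wt_zero, ← wtProd_cons]
            rw [uList_cons m m lam (by omega) hl0]
            rw [show m - m = 0 from by omega, pow_zero, mul_one]
            exact (wtProd_perm (perm_vu m lam hmono hle)).symm
    · -- VR : m ≤ n
      intro hmn2
      rcases Nat.eq_zero_or_pos m with hm0 | hm1
      · subst hm0
        have h0 : lam 0 = 0 := hzero 0 le_rfl
        have hw : wordOf 0 n lam = List.replicate n false := by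
          simp [wordOf, h0]
        rw [hw, wordElem_replicate_false]
        simp [wtProd]
      · rcases Nat.lt_or_ge (lam 0) n with hl0 | hl0x
        · -- lam 0 < n : peel last east step
          have hn1 : 1 ≤ n := by omega
          rcases Nat.lt_or_ge m n with hlt | hge2
          · -- m < n : stay VR
            have hIH := (ih m (n-1) lam (by omega)
              ⟨hmono, hle' hn1 hl0, hzero⟩).2 (by omega)
            rw [wordOf_last_e m n lam hl0, wordElem_append, hIH, wordElem_false]
            rw [mul_assoc, wtProd_Pe]
            rw [← mul_assoc, ← pow_succ, show (n-1-m)+1 = n-m from by omega]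
            congr 2
            rw [List.map_map]
            apply List.map_congr_left
            intro x hx
            simp only [Function.comp, uS, Nat.add_sub_cancel]
            omega
          · -- m = n : use VL(m, n-1)
            obtain rfl : m = n := by omega
            have hIH := (ih m (m-1) lam (by omega)
              ⟨hmono, hle' hn1 hl0, hzero⟩).1 (by omega)
            rw [wordOf_last_e m m lam hl0, wordElem_append, hIH, wordElem_false]
            rw [show m - (m-1) = 1 from by omega, pow_one, mul_assoc, ← wt_one]
            rw [← wtProd_singleton, ← wtProd_append]
            rw [show m - m = 0 from by omega, pow_zero, one_mul]
            have hsnoc := vList_snoc m m lam hn1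
            have htop : vS m lam m = 1 := by
              unfold vS
              rw [conjP_eq_zero m lam hmono m hl0]
              omega
            rw [htop] at hsnoc
            rw [← hsnoc]
            exact wtProd_perm (perm_vu m lam hmono hle)
        · -- lam 0 = n : peel last north step, stay VR
          have hl0 : lam 0 = n := le_antisymm (hle 0) hl0x
          have hlam' : IsPartitionIn (m-1) n (fun j => lam (j+1)) :=
            ⟨fun i j hij => hmono (i+1) (j+1) (by omega),
             fun i => hle (i+1), fun i hi => hzero (i+1) (by omega)⟩
          have hIH := (ih (m-1) n (fun j => lam (j+1)) (by omega) hlam').2 (by omega)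
          rw [wordOf_last_n m n lam (by omega) hl0, wordElem_append, hIH, wordElem_true]
          rw [mul_assoc, wtProd_Pn']
          rw [show n - (m-1) = (n-m)+1 from by omega, pow_succ, mul_assoc,
            ← mul_assoc Pe Pn _, ← wt_zero, ← wtProd_cons]
          rw [uList_cons m n lam (by omega) hl0]

end Aux

/-- Factorization `w(λ) = wt_{b_1} ⋯ wt_{b_n} · 𝗇^{m-n}` in `𝒫`. -/
theorem stmt6 (m n : ℕ) (hmn : n ≤ m) (lam : ℕ → ℕ) (hlam : IsPartitionIn m n lam) :
    wordElem (wordOf m n lam) =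
      ((List.range n).map fun i => wt (bSeq m lam (i + 1))).prod * Pn ^ (m - n) := by
  have hVL := (VLR (m+n) m n lam le_rfl hlam).1 hmn
  rw [hVL]
  congr 1
  have hperm := perm_bv m n lam hmn hlam.1 hlam.2.1
  have heq := wtProd_perm hperm
  rw [← heq]
  unfold wtProd
  rw [List.map_map]
  apply congrArg List.prod
  apply List.map_congr_left
  intro x _
  rfl
end

section
/- Let x and y be words in the letters 𝗇, 𝖾 and let m be a positive integer. If the word x𝖾𝗇𝖾y has m letters 𝗇 and m letters 𝖾, then in the q-Klyachko algebra 𝒦 one has (1+q)·u(λ(x𝖾𝗇𝖾y)) = q·u(λ(x𝖾𝖾𝗇y)) + u(λ(x𝗇𝖾𝖾y)). Likewise, if the word x𝗇𝖾𝗇y has m letters 𝗇 and m letters 𝖾, then (1+q)·u(λ(x𝗇𝖾𝗇y)) = q·u(λ(x𝖾𝗇𝗇y)) + u(λ(x𝗇𝗇𝖾y)). (Hence the assignment w(λ) ↦ u(λ) induces a well-defined ℂ(q)-linear map from 𝒫_{m,m} to 𝒦.) -/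
/-!
Write `a_1, …, a_m` for the area sequence of `λ(w)`, so that `u(λ(w)) = u_{a_1} ⋯ u_{a_m}`.
Replacing a factor of three letters with one or two north steps changes the area sequence only
at the positions of those north steps. For `x𝗇𝖾𝗇y` both positions carry a common value `a`, which
becomes `(a - 1, a)` in `x𝖾𝗇𝗇y` and `(a, a + 1)` in `x𝗇𝗇𝖾y`, so the identity is the defining
relation `(1 + q) u_a² = q u_a u_{a-1} + u_a u_{a+1}` times the remaining factors. For `x𝖾𝗇𝖾y`
only one position `t` changes, from `a` to `a - 1` resp. `a + 1`; the relation still applies as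
`a` occurs a second time in the sequence. The area sequence rises by at most one per step, starts
at most at `1` and ends at least at `0`, while the east steps around the middle `𝗇` give
`a_{t-1} ≥ a ≥ a_{t+1}`; a discrete intermediate value argument on the left of `t` (if `a ≥ 1`)
or on its right (if `a ≤ 0`) finds the second occurrence.
-/

theorem exists_mem_Icc_eq_of_map_succ_le_add_one {f : ℕ → ℤ} (hf : ∀ i, f (i + 1) ≤ f i + 1)
    {a : ℤ} {j₀ j₁ : ℕ} (hj : j₀ ≤ j₁) (h₀ : f j₀ ≤ a) (h₁ : a ≤ f j₁) :
    ∃ j ∈ Finset.Icc j₀ j₁, f j = a := by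
  induction j₁, hj using Nat.le_induction with
  | base => exact ⟨j₀, Finset.left_mem_Icc.2 le_rfl, le_antisymm h₀ h₁⟩
  | succ n hn ih =>
    by_cases ha : a ≤ f n
    · obtain ⟨j, hj, hfj⟩ := ih ha
      exact ⟨j, Finset.Icc_subset_Icc_right n.le_succ hj, hfj⟩
    · exact ⟨n + 1, Finset.mem_Icc.2 ⟨by omega, le_rfl⟩, by linarith [hf n]⟩

theorem eastBefore_cons_false (w : List Bool) (r : ℕ) :
    eastBefore (false :: w) r = eastBefore w r + 1 := by
  cases r <;> rfl

theorem eastBefore_cons_true_succ (w : List Bool) (r : ℕ) :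
    eastBefore (true :: w) (r + 1) = eastBefore w r :=
  rfl

theorem eastBefore_mono (w : List Bool) : Monotone (eastBefore w) := by
  induction w with
  | nil => intro r s _; cases r <;> cases s <;> exact le_rfl
  | cons b w ih =>
    intro r s hrs
    cases b with
    | false => simpa only [eastBefore_cons_false] using Nat.add_le_add_right (ih hrs) 1
    | true =>
      cases r with
      | zero => exact Nat.zero_le _
      | succ r =>
        cases s with
        | zero => omega
        | succ s => exact ih (Nat.succ_le_succ_iff.1 hrs)

theorem eastBefore_le_count_false (w : List Bool) (r : ℕ) : eastBefore w r ≤ w.count false := by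
  induction w generalizing r with
  | nil => cases r <;> exact le_rfl
  | cons b w ih =>
    cases b with
    | false => simpa [eastBefore_cons_false] using ih r
    | true =>
      cases r with
      | zero => exact Nat.zero_le _
      | succ r => simpa [eastBefore_cons_true_succ] using ih r

theorem eastBefore_append_of_lt {x : List Bool} {r : ℕ} (z : List Bool)
    (hr : r < x.count true) : eastBefore (x ++ z) r = eastBefore x r := by
  induction x generalizing r with
  | nil => simp at hr
  | cons b x ih =>
    cases b with
    | false =>
      simp only [List.cons_append, eastBefore_cons_false]
      rw [ih (by simpa using hr)]
    | true =>
      cases r with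
      | zero => rfl
      | succ r => exact ih (by simpa using hr)

theorem eastBefore_append_count_add (x z : List Bool) (r : ℕ) :
    eastBefore (x ++ z) (x.count true + r) = x.count false + eastBefore z r := by
  induction x generalizing r with
  | nil => simp
  | cons b x ih =>
    cases b with
    | false =>
      have h : (false :: x).count true = x.count true := by simp
      rw [List.cons_append, eastBefore_cons_false, h, ih, List.count_cons_self]
      omega
    | true =>
      have h : (true :: x).count true + r = (x.count true + r) + 1 := by
        rw [List.count_cons_self]; omega
      rw [List.cons_append, h, eastBefore_cons_true_succ]
      simpa using ih r

/-- `areaSeq w i` is the entry `a_{i+1}` of the area sequence of `λ(w)`. -/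
def areaSeq (w : List Bool) (i : ℕ) : ℤ := i + 1 - eastBefore w i

theorem uLam_wordLam (m : ℕ) (w : List Bool) :
    uLam m (wordLam m w) = ∏ i ∈ Finset.range m, uK (areaSeq w i) := by
  refine Finset.prod_congr rfl fun i hi => ?_
  have hi := Finset.mem_range.1 hi
  rw [wordLam, if_pos (by omega), show m - 1 - (m - 1 - i) = i by omega, areaSeq]

theorem areaSeq_succ_le (w : List Bool) (i : ℕ) : areaSeq w (i + 1) ≤ areaSeq w i + 1 := by
  have := eastBefore_mono w (Nat.le_add_right i 1)
  simp only [areaSeq]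
  push_cast
  omega

theorem areaSeq_le (w : List Bool) (i : ℕ) : areaSeq w i ≤ i + 1 := by
  simp [areaSeq]

theorem le_areaSeq (w : List Bool) (i : ℕ) : (i : ℤ) + 1 - w.count false ≤ areaSeq w i := by
  have := eastBefore_le_count_false w i
  simp only [areaSeq]
  omega

theorem areaSeq_append_of_lt {x : List Bool} {r : ℕ} (z : List Bool) (hr : r < x.count true) :
    areaSeq (x ++ z) r = areaSeq x r := by
  rw [areaSeq, areaSeq, eastBefore_append_of_lt z hr]

theorem areaSeq_append_count_add (x z : List Bool) (r : ℕ) :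
    areaSeq (x ++ z) (x.count true + r) =
      ((x.count true : ℤ) - x.count false) + areaSeq z r := by
  simp only [areaSeq, eastBefore_append_count_add]
  push_cast
  ring

theorem areaSeq_append_append_of_lt {x B : List Bool} (y : List Bool) {k : ℕ}
    (hk : k < B.count true) :
    areaSeq (x ++ B ++ y) (x.count true + k) =
      ((x.count true : ℤ) - x.count false) + areaSeq B k := by
  rw [List.append_assoc, areaSeq_append_count_add, areaSeq_append_of_lt y hk]

theorem areaSeq_append_append_add (x B y : List Bool) (k : ℕ) :
    areaSeq (x ++ B ++ y) (x.count true + B.count true + k) =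
      ((x.count true : ℤ) - x.count false) + ((B.count true : ℤ) - B.count false) +
        areaSeq y k := by
  rw [List.append_assoc, add_assoc, areaSeq_append_count_add, areaSeq_append_count_add, add_assoc]

theorem areaSeq_append_append_congr {x B B' : List Bool} (y : List Bool)
    (ht : B.count true = B'.count true) (hf : B.count false = B'.count false) {i : ℕ}
    (hi : i < x.count true ∨ x.count true + B.count true ≤ i) :
    areaSeq (x ++ B ++ y) i = areaSeq (x ++ B' ++ y) i := by
  rcases hi with hi | hi
  · simp only [List.append_assoc, areaSeq_append_of_lt _ hi]
  · obtain ⟨k, rfl⟩ := Nat.exists_eq_add_of_le hi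
    rw [areaSeq_append_append_add, ht, areaSeq_append_append_add, hf]

theorem uK_mul_uK (a : ℤ) :
    (1 + qq) • (uK a * uK a) = qq • (uK (a - 1) * uK a) + uK (a + 1) * uK a := by
  have hrel := Ideal.Quotient.eq_zero_iff_mem.2 (Ideal.subset_span (s := klyRels) ⟨a, rfl⟩)
  have hC : ∀ r : F, algebraMap F Kly r = Ideal.Quotient.mk _ (MvPolynomial.C r) := fun _ => rfl
  simp only [map_sub, map_add, map_mul, ← hC, map_one] at hrel
  have hsmul : ∀ (r : F) (z : Kly), r • z = algebraMap F Kly r * z :=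
    fun r z => Algebra.smul_def r z
  rw [hsmul, hsmul, map_add, map_one]
  simp only [uK] at hrel ⊢
  linear_combination hrel

theorem smul_prod_uK_eq {s : Finset ℕ} {f g h : ℕ → ℤ} {t j : ℕ} {a : ℤ}
    (ht : t ∈ s) (hj : j ∈ s) (htj : t ≠ j)
    (hg : ∀ i ∈ s, i ≠ t → i ≠ j → g i = f i) (hh : ∀ i ∈ s, i ≠ t → i ≠ j → h i = f i)
    (hft : f t = a) (hfj : f j = a)
    (hgtj : ({g t, g j} : Multiset ℤ) = {a - 1, a})
    (hhtj : ({h t, h j} : Multiset ℤ) = {a + 1, a}) :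
    (1 + qq) • ∏ i ∈ s, uK (f i) = qq • ∏ i ∈ s, uK (g i) + ∏ i ∈ s, uK (h i) := by
  have split : ∀ φ : ℕ → ℤ, ∏ i ∈ s, uK (φ i) =
      (({φ t, φ j} : Multiset ℤ).map uK).prod * ∏ i ∈ (s.erase t).erase j, uK (φ i) := by
    intro φ
    rw [← Finset.mul_prod_erase s _ ht,
      ← Finset.mul_prod_erase _ _ (Finset.mem_erase.2 ⟨htj.symm, hj⟩)]
    simp [mul_assoc]
  have rest : ∀ φ : ℕ → ℤ, (∀ i ∈ s, i ≠ t → i ≠ j → φ i = f i) →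
      ∏ i ∈ (s.erase t).erase j, uK (φ i) = ∏ i ∈ (s.erase t).erase j, uK (f i) := by
    intro φ hφ
    refine Finset.prod_congr rfl fun i hi => ?_
    obtain ⟨hij, hit, hi⟩ := Finset.mem_erase.1 hi |>.imp_right Finset.mem_erase.1
    rw [hφ i hi hit hij]
  rw [split f, split g, split h, rest g hg, rest h hh, hgtj, hhtj, hft, hfj]
  simp only [Multiset.insert_eq_cons, Multiset.map_cons, Multiset.map_singleton,
    Multiset.prod_cons, Multiset.prod_singleton]
  rw [← smul_mul_assoc, uK_mul_uK, add_mul, smul_mul_assoc]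

theorem exists_ne_areaSeq_eq_of_east_north_east {m : ℕ} (x y : List Bool)
    (hn : (x ++ [false, true, false] ++ y).count true = m)
    (he : (x ++ [false, true, false] ++ y).count false = m) :
    ∃ j < m, j ≠ x.count true ∧
      areaSeq (x ++ [false, true, false] ++ y) j = (x.count true : ℤ) - x.count false := by
  set w := x ++ [false, true, false] ++ y with hw
  have hnx : x.count true + 1 + y.count true = m := by simp [w, List.count_append] at hn; omega
  have hex : x.count false + 2 + y.count false = m := by simp [w, List.count_append] at he; omega
  rcases le_or_gt 1 ((x.count true : ℤ) - x.count false) with ha | ha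
  · have hleft : (x.count true : ℤ) - x.count false ≤ areaSeq w (x.count true - 1) := by
      rw [hw, List.append_assoc, areaSeq_append_of_lt _ (by omega)]
      have := le_areaSeq x (x.count true - 1)
      rwa [Nat.cast_sub (by omega), Nat.cast_one, sub_add_cancel] at this
    obtain ⟨j, hj, hwj⟩ := exists_mem_Icc_eq_of_map_succ_le_add_one (areaSeq_succ_le w)
      (Nat.zero_le _) ((areaSeq_le w 0).trans (by simpa using ha)) hleft
    have := Finset.mem_Icc.1 hj
    exact ⟨j, by omega, by omega, hwj⟩
  · have hright : areaSeq w (x.count true + 1) ≤ (x.count true : ℤ) - x.count false := by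
      have := areaSeq_append_append_add x [false, true, false] y 0
      rw [show [false, true, false].count true = 1 from rfl,
        show [false, true, false].count false = 2 from rfl, add_zero, ← hw] at this
      have hy := areaSeq_le y 0
      push_cast at this hy
      linarith
    have hlast : (x.count true : ℤ) - x.count false ≤ areaSeq w (m - 1) := by
      have := le_areaSeq w (m - 1)
      rw [he, Nat.cast_sub (by omega), Nat.cast_one] at this
      linarith
    obtain ⟨j, hj, hwj⟩ := exists_mem_Icc_eq_of_map_succ_le_add_one (areaSeq_succ_le w)
      (by omega) hright hlast
    have := Finset.mem_Icc.1 hj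
    exact ⟨j, by omega, by omega, hwj⟩

theorem smul_uLam_east_north_east {m : ℕ} (x y : List Bool)
    (hn : (x ++ [false, true, false] ++ y).count true = m)
    (he : (x ++ [false, true, false] ++ y).count false = m) :
    (1 + qq) • uLam m (wordLam m (x ++ [false, true, false] ++ y)) =
      qq • uLam m (wordLam m (x ++ [false, false, true] ++ y)) +
        uLam m (wordLam m (x ++ [true, false, false] ++ y)) := by
  obtain ⟨j, hjm, hjt, hj⟩ := exists_ne_areaSeq_eq_of_east_north_east x y hn he
  have htm : x.count true < m := by simp [List.count_append] at hn; omega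
  have hvalue : ∀ B : List Bool, 0 < B.count true →
      areaSeq (x ++ B ++ y) (x.count true) = (x.count true : ℤ) - x.count false + areaSeq B 0 :=
    fun B hB => areaSeq_append_append_of_lt (k := 0) y hB
  have hcongr : ∀ B : List Bool, B.count true = 1 → B.count false = 2 → ∀ i ≠ x.count true,
      areaSeq (x ++ B ++ y) i = areaSeq (x ++ [false, true, false] ++ y) i :=
    fun B ht hf i hi => areaSeq_append_append_congr y ht hf (by omega)
  simp only [uLam_wordLam]
  refine smul_prod_uK_eq (Finset.mem_range.2 htm) (Finset.mem_range.2 hjm) hjt.symm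
    (fun i _ hit _ => hcongr _ rfl rfl i hit) (fun i _ hit _ => hcongr _ rfl rfl i hit)
    ?_ hj ?_ ?_
  · rw [hvalue _ (by decide)]
    norm_num [areaSeq, eastBefore]
  · rw [hvalue _ (by decide), hcongr _ rfl rfl j hjt, hj]
    norm_num [areaSeq, eastBefore]
    ring
  · rw [hvalue _ (by decide), hcongr _ rfl rfl j hjt, hj]
    norm_num [areaSeq, eastBefore]

theorem smul_uLam_north_east_north {m : ℕ} (x y : List Bool)
    (hn : (x ++ [true, false, true] ++ y).count true = m) :
    (1 + qq) • uLam m (wordLam m (x ++ [true, false, true] ++ y)) =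
      qq • uLam m (wordLam m (x ++ [false, true, true] ++ y)) +
        uLam m (wordLam m (x ++ [true, true, false] ++ y)) := by
  have htm : x.count true + 1 < m := by simp [List.count_append] at hn; omega
  have hvalue : ∀ B : List Bool, ∀ k < B.count true,
      areaSeq (x ++ B ++ y) (x.count true + k) =
        (x.count true : ℤ) - x.count false + areaSeq B k :=
    fun B k hk => areaSeq_append_append_of_lt y hk
  have hvalue₀ : ∀ B : List Bool, 0 < B.count true →
      areaSeq (x ++ B ++ y) (x.count true) = (x.count true : ℤ) - x.count false + areaSeq B 0 :=
    fun B => hvalue B 0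
  have hcongr : ∀ B : List Bool, B.count true = 2 → B.count false = 1 →
      ∀ i ≠ x.count true, i ≠ x.count true + 1 →
      areaSeq (x ++ B ++ y) i = areaSeq (x ++ [true, false, true] ++ y) i :=
    fun B ht hf i hi hi' => areaSeq_append_append_congr y ht hf (by omega)
  simp only [uLam_wordLam]
  refine smul_prod_uK_eq (a := (x.count true : ℤ) - x.count false + 1)
    (Finset.mem_range.2 (by omega)) (Finset.mem_range.2 htm) (by omega)
    (fun i _ hit hij => hcongr _ rfl rfl i hit hij) (fun i _ hit hij => hcongr _ rfl rfl i hit hij)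
    ?_ ?_ ?_ ?_
  · rw [hvalue₀ _ (by decide)]
    norm_num [areaSeq, eastBefore]
  · rw [hvalue _ 1 (by decide)]
    norm_num [areaSeq, eastBefore]
  · rw [hvalue₀ _ (by decide), hvalue _ 1 (by decide)]
    norm_num [areaSeq, eastBefore]
  · rw [hvalue₀ _ (by decide), hvalue _ 1 (by decide), Multiset.pair_comm]
    norm_num [areaSeq, eastBefore]
    ring

theorem stmt8_general (m : ℕ) (x y : List Bool) :
    (((x ++ [false, true, false] ++ y).count true = m →
      (x ++ [false, true, false] ++ y).count false = m →
      (1 + qq) • uLam m (wordLam m (x ++ [false, true, false] ++ y)) =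
        qq • uLam m (wordLam m (x ++ [false, false, true] ++ y)) +
        uLam m (wordLam m (x ++ [true, false, false] ++ y)))) ∧
    (((x ++ [true, false, true] ++ y).count true = m →
      (x ++ [true, false, true] ++ y).count false = m →
      (1 + qq) • uLam m (wordLam m (x ++ [true, false, true] ++ y)) =
        qq • uLam m (wordLam m (x ++ [false, true, true] ++ y)) +
        uLam m (wordLam m (x ++ [true, true, false] ++ y)))) :=
  ⟨smul_uLam_east_north_east x y, fun hn _ => smul_uLam_north_east_north x y hn⟩

/-- The map `w(λ) ↦ u(λ)` respects the modular relations, hence induces a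
well-defined linear map `𝒫_{m,m} → 𝒦`. Letters: `true = 𝗇`, `false = 𝖾`. -/
theorem stmt8 (m : ℕ) (hm : 1 ≤ m) (x y : List Bool) :
    (((x ++ [false, true, false] ++ y).count true = m →
      (x ++ [false, true, false] ++ y).count false = m →
      (1 + qq) • uLam m (wordLam m (x ++ [false, true, false] ++ y)) =
        qq • uLam m (wordLam m (x ++ [false, false, true] ++ y)) +
        uLam m (wordLam m (x ++ [true, false, false] ++ y)))) ∧
    (((x ++ [true, false, true] ++ y).count true = m →
      (x ++ [true, false, true] ++ y).count false = m →
      (1 + qq) • uLam m (wordLam m (x ++ [true, false, true] ++ y)) =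
        qq • uLam m (wordLam m (x ++ [false, true, true] ++ y)) +
        uLam m (wordLam m (x ++ [true, true, false] ++ y)))) :=
  stmt8_general m x y
end
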